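/- arXiv:1903.08893 — 5 statements merged into one kernel-verified Lean document; each statement's English description precedes it below -/
import Mathlib

section
/- Let A be a real m×n matrix and suppose there exists t ∈ ℝ^m with Aᵀt = 1 (the all-ones vector in ℝⁿ). Let x⁰ ∈ ℝⁿ with x⁰ ≥ 0 componentwise and set y = A x⁰. Then for every x ∈ ℝⁿ with x ≥ 0 componentwise, ‖x‖₁ − ‖x⁰‖₁ ≤ ‖t‖₂ · ‖A x − y‖₂. -/
/-- If the row span of `A` contains the all-ones vector (via `Aᵀ t = 1`), then for any
nonnegative `x⁰` with data `y = A x⁰` and any nonnegative `x`,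
`‖x‖₁ − ‖x⁰‖₁ ≤ ‖t‖₂ · ‖A x − y‖₂`. -/
theorem stmt_0 {m n : ℕ} (A : Matrix (Fin m) (Fin n) ℝ) (t : Fin m → ℝ)
    (ht : A.transpose.mulVec t = fun _ => 1)
    (x0 : Fin n → ℝ) (hx0 : ∀ j, 0 ≤ x0 j)
    (y : Fin m → ℝ) (hy : y = A.mulVec x0)
    (x : Fin n → ℝ) (hx : ∀ j, 0 ≤ x j) :
    (∑ j, |x j|) - (∑ j, |x0 j|) ≤
      Real.sqrt (∑ i, (t i) ^ 2) * Real.sqrt (∑ i, (A.mulVec x i - y i) ^ 2) := by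
  have key : ∀ v : Fin n → ℝ, (∀ j, 0 ≤ v j) →
      (∑ j, |v j|) = ∑ i, t i * A.mulVec v i := by
    intro v hv
    have h1 : (∑ j, |v j|) = ∑ j, v j := by
      simp only [abs_of_nonneg (hv _)]
    have h2 : dotProduct t (A.mulVec v) = dotProduct (A.transpose.mulVec t) v := by
      rw [Matrix.dotProduct_mulVec, Matrix.mulVec_transpose]
    rw [h1]
    have := h2
    rw [ht] at this
    simp [dotProduct, one_mul] at this
    rw [← this]
  have hdiff : (∑ j, |x j|) - (∑ j, |x0 j|) = ∑ i, t i * (A.mulVec x i - y i) := by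
    rw [key x hx, key x0 hx0, hy]
    rw [← Finset.sum_sub_distrib]
    congr 1; ext i; ring
  rw [hdiff]
  exact Real.sum_mul_le_sqrt_mul_sqrt _ t (fun i => A.mulVec x i - y i)
end

section
/- Let A be a real m×n matrix and suppose there exists t ∈ ℝ^m with Aᵀt = 1 (the all-ones vector in ℝⁿ). Let x⁰ ∈ ℝⁿ with x⁰ ≥ 0 componentwise and set y = A x⁰. Then every x ∈ ℝⁿ with x ≥ 0 componentwise and A x = y satisfies ‖x‖₁ = ‖x⁰‖₁; in particular, every nonnegative solution of A x = y is a minimizer of ‖·‖₁ over the feasible set {x ≥ 0 : A x = y}, so ℓ¹-minimization with nonnegativity constraint reduces to a feasibility problem. -/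
lemma key {m n : ℕ} (A : Matrix (Fin m) (Fin n) ℝ) (t : Fin m → ℝ)
    (ht : A.transpose.mulVec t = fun _ => 1)
    (y : Fin m → ℝ)
    (z : Fin n → ℝ) (hz : ∀ j, 0 ≤ z j) (hAz : A.mulVec z = y) :
    (∑ j, |z j|) = ∑ i, t i * y i := by
  have h1 : ∀ j, ∑ i, A i j * t i = 1 := by
    intro j
    have := congrFun ht j
    simpa [Matrix.mulVec, dotProduct, Matrix.transpose] using this
  calc ∑ j, |z j| = ∑ j, z j := by
        simp [abs_of_nonneg (hz _)]
    _ = ∑ j, z j * ∑ i, A i j * t i := by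
        simp [h1]
    _ = ∑ j, ∑ i, t i * (A i j * z j) := by
        congr 1; ext j; rw [Finset.mul_sum]; congr 1; ext i; ring
    _ = ∑ i, t i * ∑ j, A i j * z j := by
        rw [Finset.sum_comm]; simp [Finset.mul_sum]
    _ = ∑ i, t i * y i := by
        congr 1; ext i
        rw [← hAz]; simp [Matrix.mulVec, dotProduct]

/-- If `Aᵀ t = 1`, `x⁰ ≥ 0`, `y = A x⁰`, then every nonnegative solution `x` of `A x = y`
satisfies `‖x‖₁ = ‖x⁰‖₁` and is a minimizer of the ℓ¹-norm over the feasible set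
`{z ≥ 0 : A z = y}`. -/
theorem stmt_1 {m n : ℕ} (A : Matrix (Fin m) (Fin n) ℝ) (t : Fin m → ℝ)
    (ht : A.transpose.mulVec t = fun _ => 1)
    (x0 : Fin n → ℝ) (hx0 : ∀ j, 0 ≤ x0 j)
    (y : Fin m → ℝ) (hy : y = A.mulVec x0)
    (x : Fin n → ℝ) (hx : ∀ j, 0 ≤ x j) (hAx : A.mulVec x = y) :
    (∑ j, |x j|) = (∑ j, |x0 j|) ∧
      ∀ z : Fin n → ℝ, (∀ j, 0 ≤ z j) → A.mulVec z = y →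
        (∑ j, |x j|) ≤ (∑ j, |z j|) := by
  have hxk := key A t ht y x hx hAx
  have hx0k := key A t ht y x0 hx0 hy.symm
  constructor
  · rw [hxk, hx0k]
  · intro z hz hAz
    rw [hxk, key A t ht y z hz hAz]
end

section
/- Let A ∈ ℝ^{m×n}, y ∈ ℝ^m, λ̃ > 0, q ∈ ℝⁿ, and let g : ℝⁿ → ℝ be convex. Suppose x* ∈ ℝⁿ minimizes the functional x ↦ (1/2)‖y − A x‖₂² + λ̃·(g(x) − ⟨q, x⟩) over ℝⁿ. Then q⁺ := q + (1/λ̃)·Aᵀ(y − A x*) is a subgradient of g at x*, i.e. for all z ∈ ℝⁿ, g(z) ≥ g(x*) + ⟨q⁺, z − x*⟩. -/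
lemma aux_le_zero (a C : ℝ) (h : ∀ t : ℝ, 0 < t → t ≤ 1 → a ≤ t * C) : a ≤ 0 := by
  rcases le_or_gt C 0 with hC | hC
  · have := h 1 one_pos le_rfl; linarith
  · refine le_of_forall_pos_le_add fun ε hε => ?_
    have ht0 : 0 < min 1 (ε / C) := lt_min one_pos (div_pos hε hC)
    have h1 := h _ ht0 (min_le_left _ _)
    have h2 : min 1 (ε / C) * C ≤ ε := by
      calc min 1 (ε / C) * C ≤ (ε / C) * C :=
            mul_le_mul_of_nonneg_right (min_le_right _ _) hC.le
        _ = ε := div_mul_cancel₀ _ hC.ne'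
    linarith

/-- Optimality condition underlying the Bregman iteration: if `x*` minimizes
`x ↦ (1/2)‖y − A x‖₂² + λ̃·(g(x) − ⟨q, x⟩)` with `g` convex, then
`q⁺ = q + (1/λ̃)·Aᵀ(y − A x*)` is a subgradient of `g` at `x*`. -/
theorem stmt_7 {m n : ℕ} (A : Matrix (Fin m) (Fin n) ℝ) (y : Fin m → ℝ)
    (lam : ℝ) (hlam : 0 < lam) (q : Fin n → ℝ) (g : (Fin n → ℝ) → ℝ)
    (hg : ConvexOn ℝ Set.univ g)
    (xstar : Fin n → ℝ)
    (hmin : ∀ x : Fin n → ℝ,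
      (1 / 2) * (∑ i, (y i - A.mulVec xstar i) ^ 2) +
          lam * (g xstar - ∑ j, q j * xstar j) ≤
        (1 / 2) * (∑ i, (y i - A.mulVec x i) ^ 2) + lam * (g x - ∑ j, q j * x j)) :
    ∀ z : Fin n → ℝ,
      g z ≥ g xstar +
        ∑ j, (q j + (1 / lam) * A.transpose.mulVec (y - A.mulVec xstar) j) *
          (z j - xstar j) := by
  intro z
  set r : Fin m → ℝ := fun i => y i - A.mulVec xstar i with hr
  set w : Fin m → ℝ := A.mulVec (z - xstar) with hw
  set S1 : ℝ := ∑ i, r i * w i with hS1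
  set S2 : ℝ := ∑ i, (w i) ^ 2 with hS2
  set Q : ℝ := ∑ j, q j * (z j - xstar j) with hQ
  have key : ∀ t : ℝ, 0 < t → t ≤ 1 →
      S1 + lam * Q - lam * (g z - g xstar) ≤ t * (S2 / 2) := by
    intro t ht0 ht1
    have hmin' := hmin (xstar + t • (z - xstar))
    have hsum : ∑ i, (y i - A.mulVec (xstar + t • (z - xstar)) i) ^ 2
        = (∑ i, (y i - A.mulVec xstar i) ^ 2) - 2 * t * S1 + t ^ 2 * S2 := by
      simp only [hS1, hS2, hr, hw, Finset.mul_sum]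
      rw [← Finset.sum_sub_distrib, ← Finset.sum_add_distrib]
      refine Finset.sum_congr rfl fun i _ => ?_
      simp only [Matrix.mulVec_add, Matrix.mulVec_smul, Pi.add_apply, Pi.smul_apply,
        smul_eq_mul]
      ring
    have hq : ∑ j, q j * (xstar + t • (z - xstar)) j
        = (∑ j, q j * xstar j) + t * Q := by
      simp only [hQ, Finset.mul_sum]
      rw [← Finset.sum_add_distrib]
      refine Finset.sum_congr rfl fun j _ => ?_
      simp only [Pi.add_apply, Pi.smul_apply, Pi.sub_apply, smul_eq_mul]
      ring
    have hconv : g (xstar + t • (z - xstar)) ≤ (1 - t) * g xstar + t * g z := by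
      have h := hg.2 (Set.mem_univ xstar) (Set.mem_univ z)
        (by linarith : (0:ℝ) ≤ 1 - t) ht0.le (by ring)
      have heq : (1 - t) • xstar + t • z = xstar + t • (z - xstar) := by module
      rw [heq] at h
      simpa using h
    rw [hsum, hq] at hmin'
    have h2 : t * (S1 + lam * Q - lam * (g z - g xstar)) ≤ t * (t * (S2 / 2)) := by
      nlinarith [hmin', hconv]
    exact le_of_mul_le_mul_left h2 ht0
  have hle := aux_le_zero _ _ key
  have hT : ∑ j, A.transpose.mulVec (y - A.mulVec xstar) j * (z j - xstar j) = S1 := by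
    simp only [hS1, hr, hw, Matrix.mulVec, Matrix.transpose_apply,
      Pi.sub_apply, dotProduct, Finset.sum_mul, Finset.mul_sum]
    rw [Finset.sum_comm]
    refine Finset.sum_congr rfl fun i _ => Finset.sum_congr rfl fun j _ => by ring
  have hsplit : ∑ j, (q j + (1 / lam) * A.transpose.mulVec (y - A.mulVec xstar) j) *
      (z j - xstar j) = Q + (1 / lam) * S1 := by
    rw [← hT, hQ, Finset.mul_sum, ← Finset.sum_add_distrib]
    exact Finset.sum_congr rfl fun j _ => by ring
  rw [ge_iff_le, hsplit]
  have h3 : S1 ≤ lam * (g z - g xstar - Q) := by linarith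
  have h4 : (1 / lam) * S1 ≤ g z - g xstar - Q := by
    calc (1 / lam) * S1 ≤ (1 / lam) * (lam * (g z - g xstar - Q)) :=
          mul_le_mul_of_nonneg_left h3 (by positivity)
      _ = g z - g xstar - Q := by field_simp
  linarith
end

section
/- Let B₁, …, B_m ∈ ℂⁿ and y ∈ ℝ^m with yᵢ ≥ 0, and define the amplitude least squares functional L̃ : ℝⁿ → ℝ by L̃(x) = Σᵢ (√yᵢ − |Σⱼ (Bᵢ)ⱼ xⱼ|)². If x ∈ ℝⁿ is such that Σⱼ (Bᵢ)ⱼ xⱼ ≠ 0 for every i, then L̃ is differentiable at x with gradient ∇L̃(x) = −2·Σᵢ (√yᵢ/|Σⱼ (Bᵢ)ⱼ xⱼ| − 1)·(⟨Re Bᵢ, x⟩·Re Bᵢ + ⟨Im Bᵢ, x⟩·Im Bᵢ). (This gradient is the descent direction underlying the truncated amplitude flow; L̃ is not differentiable where some Σⱼ (Bᵢ)ⱼ xⱼ = 0.) -/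
/-! Writing `a` for the `ℝ`-linear map `z ↦ Σⱼ (Bᵢ)ⱼ zⱼ` from `ℝⁿ` to `ℂ`, the norm `‖a z‖` is
smooth where `a z ≠ 0`, with derivative `h ↦ ⟪a x, a h⟫ / ‖a x‖`. Hence the summand
`(c - ‖a z‖)²` has gradient `-2 (c / ‖a x‖ - 1) • a† (a x)`, and the adjoint `a†` sends `w ∈ ℂ`
to `Re w • Re Bᵢ + Im w • Im Bᵢ`. -/

open ContinuousLinearMap

theorem HasFDerivAt.norm {G F : Type*} [NormedAddCommGroup G] [NormedSpace ℝ G]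
    [NormedAddCommGroup F] [InnerProductSpace ℝ F] {f : G → F} {f' : G →L[ℝ] F} {x : G}
    (hf : HasFDerivAt f f' x) (h0 : f x ≠ 0) :
    HasFDerivAt (fun z => ‖f z‖) (‖f x‖⁻¹ • (innerSL ℝ (f x)).comp f') x := by
  have hsq := hf.norm_sq.sqrt (by positivity)
  simp only [Real.sqrt_sq (norm_nonneg _)] at hsq
  refine hsq.congr_fderiv ?_
  ext h
  simp only [one_div, mul_inv_rev, smul_apply, comp_apply, coe_innerSL_apply, nsmul_eq_mul,
    Nat.cast_ofNat, smul_eq_mul]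
  field_simp

theorem HasGradientAt.sum {𝕜 F ι : Type*} [RCLike 𝕜] [NormedAddCommGroup F]
    [InnerProductSpace 𝕜 F] [CompleteSpace F] {u : Finset ι} {f : ι → F → 𝕜} {f' : ι → F}
    {x : F} (h : ∀ i ∈ u, HasGradientAt (f i) (f' i) x) :
    HasGradientAt (fun z => ∑ i ∈ u, f i z) (∑ i ∈ u, f' i) x := by
  rw [hasGradientAt_iff_hasFDerivAt, map_sum]
  exact HasFDerivAt.fun_sum fun i hi => hasGradientAt_iff_hasFDerivAt.1 (h i hi)

theorem hasGradientAt_sq_sub_norm {E F : Type*} [NormedAddCommGroup E] [InnerProductSpace ℝ E]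
    [CompleteSpace E] [NormedAddCommGroup F] [InnerProductSpace ℝ F] [CompleteSpace F]
    (a : E →L[ℝ] F) (c : ℝ) {x : E} (hx : a x ≠ 0) :
    HasGradientAt (fun z => (c - ‖a z‖) ^ 2) ((-2 * (c / ‖a x‖ - 1)) • adjoint a (a x)) x := by
  rw [hasGradientAt_iff_hasFDerivAt]
  refine (((hasFDerivAt_const c x).sub (a.hasFDerivAt.norm hx)).pow 2).congr_fderiv ?_
  ext h
  have hnorm : ‖a x‖ ≠ 0 := norm_ne_zero_iff.2 hx
  simp only [Pi.sub_apply, Nat.add_one_sub_one, pow_one, nsmul_eq_mul, Nat.cast_ofNat, zero_sub,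
    smul_neg, neg_apply, smul_apply, comp_apply, coe_innerSL_apply, smul_eq_mul, neg_mul, neg_smul,
    map_neg, map_smul, InnerProductSpace.toDual_apply_apply, adjoint_inner_left, neg_inj]
  field_simp

noncomputable def complexDot {ι : Type*} [Fintype ι] (b : ι → ℂ) : EuclideanSpace ℝ ι →L[ℝ] ℂ :=
  ∑ j, (EuclideanSpace.proj j).smulRight (b j)

section complexDot

variable {ι : Type*} [Fintype ι] (b : ι → ℂ) (z : EuclideanSpace ℝ ι)

theorem complexDot_apply : complexDot b z = ∑ j, b j * z j := by
  simp [complexDot, Complex.real_smul, mul_comm]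

theorem complexDot_re : (complexDot b z).re = ∑ j, (b j).re * z j := by
  simp [complexDot_apply, Complex.re_sum]

theorem complexDot_im : (complexDot b z).im = ∑ j, (b j).im * z j := by
  simp [complexDot_apply, Complex.im_sum]

theorem adjoint_complexDot_apply (w : ℂ) :
    adjoint (complexDot b) w = WithLp.toLp 2 fun j => w.re * (b j).re + w.im * (b j).im := by
  refine ext_inner_right ℝ fun h => ?_
  rw [adjoint_inner_left, Complex.inner, PiLp.inner_apply]
  simp only [Complex.mul_re, complexDot_re, Complex.conj_re, complexDot_im, Complex.conj_im,
    mul_neg, sub_neg_eq_add, RCLike.inner_apply, Real.ringHom_apply]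
  rw [Finset.sum_mul, Finset.sum_mul, ← Finset.sum_add_distrib]
  exact Finset.sum_congr rfl fun j _ => by ring

end complexDot

theorem stmt_10_general {m n : ℕ} (B : Fin m → Fin n → ℂ) (y : Fin m → ℝ)
    (x : EuclideanSpace ℝ (Fin n)) (hx : ∀ i, (∑ j, B i j * (x j : ℂ)) ≠ 0) :
    HasGradientAt
      (fun z : EuclideanSpace ℝ (Fin n) =>
        ∑ i, (Real.sqrt (y i) - ‖∑ j, B i j * (z j : ℂ)‖) ^ 2)
      ((WithLp.toLp 2 fun j => -2 * ∑ i,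
          (Real.sqrt (y i) / ‖∑ j', B i j' * (x j' : ℂ)‖ - 1) *
            ((∑ j', (B i j').re * x j') * (B i j).re +
              (∑ j', (B i j').im * x j') * (B i j).im) : EuclideanSpace ℝ (Fin n)))
      x := by
  simp_rw [← complexDot_apply] at hx ⊢
  convert HasGradientAt.sum fun i (_ : i ∈ Finset.univ) =>
    hasGradientAt_sq_sub_norm (complexDot (B i)) (Real.sqrt (y i)) (hx i) using 1
  ext j
  simp [adjoint_complexDot_apply, complexDot_re, complexDot_im, Finset.mul_sum, mul_assoc]

/-- The amplitude least squares functional `L̃(x) = Σᵢ (√yᵢ − |Σⱼ (Bᵢ)ⱼ xⱼ|)²` is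
differentiable at every `x` with `Σⱼ (Bᵢ)ⱼ xⱼ ≠ 0` for all `i`, with gradient
`∇L̃(x) = −2·Σᵢ (√yᵢ/|Σⱼ (Bᵢ)ⱼ xⱼ| − 1)·(⟨Re Bᵢ, x⟩·Re Bᵢ + ⟨Im Bᵢ, x⟩·Im Bᵢ)`. -/
theorem stmt_10 {m n : ℕ} (B : Fin m → Fin n → ℂ) (y : Fin m → ℝ) (hy : ∀ i, 0 ≤ y i)
    (x : EuclideanSpace ℝ (Fin n)) (hx : ∀ i, (∑ j, B i j * (x j : ℂ)) ≠ 0) :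
    HasGradientAt
      (fun z : EuclideanSpace ℝ (Fin n) =>
        ∑ i, (Real.sqrt (y i) - ‖∑ j, B i j * (z j : ℂ)‖) ^ 2)
      ((WithLp.toLp 2 fun j => -2 * ∑ i,
          (Real.sqrt (y i) / ‖∑ j', B i j' * (x j' : ℂ)‖ - 1) *
            ((∑ j', (B i j').re * x j') * (B i j).re +
              (∑ j', (B i j').im * x j') * (B i j).im) : EuclideanSpace ℝ (Fin n)))
      x :=
  stmt_10_general B y x hx
end

section
/- Let A be a real m×n matrix with t ∈ ℝ^m satisfying Aᵀt = 1 (the all-ones vector), let x⁰ ∈ ℝⁿ with x⁰ ≥ 0 componentwise, and set y = A x⁰ (noiseless data). Then every minimizer x̂ of the nonnegative least squares problem min_{x ≥ 0} ‖y − A x‖₂² satisfies A x̂ = y and ‖x̂‖₁ = ‖x⁰‖₁; i.e., in the noiseless setting NNLS recovers a nonnegative point of minimal ℓ¹-norm matching the data. -/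
/-- In the noiseless setting, if `Aᵀ t = 1`, `x⁰ ≥ 0` and `y = A x⁰`, then every minimizer
`x̂` of the nonnegative least squares problem `min_{x ≥ 0} ‖y − A x‖₂²` satisfies
`A x̂ = y` and `‖x̂‖₁ = ‖x⁰‖₁`. -/
theorem stmt_14 {m n : ℕ} (A : Matrix (Fin m) (Fin n) ℝ) (t : Fin m → ℝ)
    (ht : A.transpose.mulVec t = fun _ => 1)
    (x0 : Fin n → ℝ) (hx0 : ∀ j, 0 ≤ x0 j)
    (y : Fin m → ℝ) (hy : y = A.mulVec x0)
    (xhat : Fin n → ℝ) (hxhat : ∀ j, 0 ≤ xhat j)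
    (hmin : ∀ z : Fin n → ℝ, (∀ j, 0 ≤ z j) →
      (∑ i, (y i - A.mulVec xhat i) ^ 2) ≤ (∑ i, (y i - A.mulVec z i) ^ 2)) :
    A.mulVec xhat = y ∧ (∑ j, |xhat j|) = (∑ j, |x0 j|) := by
  have h0 : (∑ i, (y i - A.mulVec xhat i) ^ 2) ≤ 0 := by
    have := hmin x0 hx0
    simpa [hy] using this
  have hsum : (∑ i, (y i - A.mulVec xhat i) ^ 2) = 0 :=
    le_antisymm h0 (Finset.sum_nonneg fun i _ => sq_nonneg _)
  have heach : ∀ i, (y i - A.mulVec xhat i) ^ 2 = 0 := by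
    intro i
    have := (Finset.sum_eq_zero_iff_of_nonneg (fun i _ => sq_nonneg (y i - A.mulVec xhat i))).mp hsum
    exact this i (Finset.mem_univ i)
  have hAx : A.mulVec xhat = y := by
    funext i
    have := pow_eq_zero_iff (n := 2) (by norm_num) |>.mp (heach i)
    linarith
  refine ⟨hAx, ?_⟩
  have key : ∀ v : Fin n → ℝ, (∑ j, v j) = dotProduct t (A.mulVec v) := by
    intro v
    rw [Matrix.dotProduct_mulVec, ← Matrix.mulVec_transpose, ht]
    simp [dotProduct]
  have h1 : (∑ j, xhat j) = ∑ j, x0 j := by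
    rw [key xhat, key x0, hAx, hy]
  calc (∑ j, |xhat j|) = ∑ j, xhat j := by
        refine Finset.sum_congr rfl fun j _ => abs_of_nonneg (hxhat j)
    _ = ∑ j, x0 j := h1
    _ = ∑ j, |x0 j| := by
        refine Finset.sum_congr rfl fun j _ => (abs_of_nonneg (hx0 j)).symm
end
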